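/- In the reduction graph G constructed from an instance (H, s) of independent set, the set {w_2} ∪ S, where S is the set of s selection vertices, is a vertex cover of G of size s + 1. -/
import Mathlib


/-- Colors for the reduction: the color `c-star`, the colors `a` and `b`, and a color
`c i p` for each selection index `i` and each vertex `u_p` of `H`. -/
inductive RCol (n s : ℕ) where
  | star : RCol n s
  | a : RCol n s
  | b : RCol n s
  | c (i : Fin s) (p : Fin n) : RCol n s
deriving DecidableEq

/-- Index data of an `(i,j;p,q)`-forbidding gadget: it is valid when `i < j` and either
`p = q` (one gadget per vertex `u_p` of `H`) or `u_p u_q` is an edge of `H`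
(both orientations of each edge). -/
def Gadget {n : ℕ} (H : SimpleGraph (Fin n)) (s : ℕ) :=
  {x : (Fin s × Fin s) × Fin n × Fin n //
    x.1.1 < x.1.2 ∧ (x.2.1 = x.2.2 ∨ H.Adj x.2.1 x.2.2)}

instance {n : ℕ} (H : SimpleGraph (Fin n)) (s : ℕ) : DecidableEq (Gadget H s) :=
  Subtype.instDecidableEq

/-- Vertices of the reduction graph: selection vertices `v_i` (`Sum.inl i`), forbidding
vertices (`Sum.inr (Sum.inl g)`), and the two vertices `w₁ = Sum.inr (Sum.inr 0)` and
`w₂ = Sum.inr (Sum.inr 1)`. -/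
abbrev RV {n : ℕ} (H : SimpleGraph (Fin n)) (s : ℕ) := Fin s ⊕ (Gadget H s ⊕ Fin 2)

/-- Base adjacency relation of the reduction graph: `w₂` is adjacent to every selection
vertex and to `w₁`; an `(i,j;p,q)`-forbidding vertex is adjacent to `v_i` and `v_j`. -/
def redRel {n : ℕ} (H : SimpleGraph (Fin n)) (s : ℕ) : RV H s → RV H s → Prop
  | Sum.inl i, Sum.inr (Sum.inr j) => j = 1
  | Sum.inr (Sum.inl g), Sum.inl i => i = g.val.1.1 ∨ i = g.val.1.2
  | Sum.inr (Sum.inr j), Sum.inr (Sum.inr j') => j = 0 ∧ j' = 1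
  | _, _ => False

/-- The reduction graph `G` constructed from the instance `(H, s)` of independent set. -/
def redGraph {n : ℕ} (H : SimpleGraph (Fin n)) (s : ℕ) : SimpleGraph (RV H s) :=
  SimpleGraph.fromRel (redRel H s)

/-- The list assignment of the reduction: `L(v_i) = {c-star, c_i^1, ..., c_i^n}`, an
`(i,j;p,q)`-forbidding vertex has list `{c_i^q, c_j^p}`, `L(w₁) = {a, b}`, and
`L(w₂) = {a, b, c-star}`. -/
def redList {n : ℕ} (H : SimpleGraph (Fin n)) (s : ℕ) : RV H s → Set (RCol n s)
  | Sum.inl i => {RCol.star} ∪ {x | ∃ p, x = RCol.c i p}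
  | Sum.inr (Sum.inl g) => {RCol.c g.val.1.1 g.val.2.2, RCol.c g.val.1.2 g.val.2.1}
  | Sum.inr (Sum.inr j) =>
      if j = 0 then {RCol.a, RCol.b} else {RCol.a, RCol.b, RCol.star}

/-- `f` is a proper list coloring of `G` with respect to the list assignment `L`. -/
def IsProperListColoring {V C : Type*} (G : SimpleGraph V) (L : V → Set C) (f : V → C) : Prop :=
  (∀ v, f v ∈ L v) ∧ ∀ u v, G.Adj u v → f u ≠ f v

/-- In the reduction graph `G` constructed from an instance `(H, s)` of independent set,
the set `{w₂} ∪ S`, where `S` is the set of the `s` selection vertices, is a vertex cover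
of `G` of size `s + 1`. -/
theorem reduction_vertexCover {n : ℕ} (H : SimpleGraph (Fin n)) (s : ℕ) :
    (∀ u v : RV H s, (redGraph H s).Adj u v →
        u ∈ insert (Sum.inr (Sum.inr 1) : RV H s)
            (Finset.univ.image (Sum.inl : Fin s → RV H s)) ∨
        v ∈ insert (Sum.inr (Sum.inr 1) : RV H s)
            (Finset.univ.image (Sum.inl : Fin s → RV H s))) ∧
    (insert (Sum.inr (Sum.inr 1) : RV H s)
        (Finset.univ.image (Sum.inl : Fin s → RV H s))).card = s + 1 := by
  constructor
  · rintro (i | u) v h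
    · exact Or.inl (by simp)
    rcases v with j | v
    · exact Or.inr (by simp)
    rw [redGraph, SimpleGraph.fromRel_adj] at h
    rcases u with g | j <;> rcases v with g' | j'
    · obtain ⟨-, h | h⟩ := h <;> exact h.elim
    · obtain ⟨-, h | h⟩ := h <;> exact h.elim
    · obtain ⟨-, h | h⟩ := h <;> exact h.elim
    · obtain ⟨-, ⟨h1, h2⟩ | ⟨h1, h2⟩⟩ := h
      · exact Or.inr (by simp [h2])
      · exact Or.inl (by simp [h2])
  · rw [Finset.card_insert_of_notMem (by simp), Finset.card_image_of_injective _ Sum.inl_injective, Finset.card_univ, Fintype.card_fin]
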